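/- Gluing lemma for all sentences: let V be a Gödel set, I a V-interpretation, and ω ∈ [0,1) a value that is isolated in V from above, i.e., V ∩ (ω, ω+ε) = ∅ for some ε > 0. Define I_ω on atomic sentences by I_ω(P)=I(P) if I(P)≤ω and I_ω(P)=1 otherwise. Then for every sentence B (with parameters from the domain), including sentences containing universal quantifiers, I_ω(B)=I(B) if I(B)≤ω and I_ω(B)=1 otherwise. -/

import Mathlib

/-!
Gluing replaces every atomic value `x` by `g x`, where `g x = x` for `x ≤ ω` and `g x = 1`
otherwise, and the claim is that `g` commutes with all Gödel connectives and quantifiers.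
Since `0 ≤ ω < 1`, `g` is monotone with `g 0 = 0`, which handles `⊥`, `∧`, `∨` and `⊃`;
being left-continuous, it also commutes with suprema. Infima are the only delicate case, as `g`
jumps at `ω`: there one uses that no value of `V` lies in `(ω, ω + ε)`, so an infimum `≤ ω`
of values in `V` forces some value `≤ ω`.
-/

namespace GodelPaper

/-- A first-order language: function and relation symbols of each arity. -/
structure Lang where
  Func : ℕ → Type
  Rel : ℕ → Type

/-- A Gödel set: a closed subset of [0,1] containing 0 and 1. -/
def GodelSet (V : Set ℝ) : Prop :=
  IsClosed V ∧ V ⊆ Set.Icc 0 1 ∧ (0:ℝ) ∈ V ∧ (1:ℝ) ∈ V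

/-- Terms with variables from `α`. -/
inductive Term (L : Lang) (α : Type) : Type
  | var : α → Term L α
  | func : ∀ {k}, L.Func k → (Fin k → Term L α) → Term L α

/-- A `V`-interpretation: nonempty domain, interpretation of function symbols,
and truth values in `V` for atomic sentences with parameters. -/
structure Interp (L : Lang) (V : Set ℝ) where
  Dom : Type
  dom_nonempty : Nonempty Dom
  funMap : ∀ {k}, L.Func k → (Fin k → Dom) → Dom
  relVal : ∀ {k}, L.Rel k → (Fin k → Dom) → ℝ
  relVal_mem : ∀ {k} (R : L.Rel k) (v : Fin k → Dom), relVal R v ∈ V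

def Term.eval {L : Lang} {V : Set ℝ} (I : Interp L V) {α : Type} (v : α → I.Dom) :
    Term L α → I.Dom
  | .var i => v i
  | .func f ts => I.funMap f fun j => Term.eval I v (ts j)

/-- Formulas of the Δ-extended language, with free variables among `Fin n`.
The quantifiers bind the *last* variable. Δ-free formulas (i.e. formulas of the
plain language) are singled out by the predicate `DeltaFree` below. -/
inductive Form (L : Lang) : ℕ → Type
  | falsum : ∀ {n}, Form L n
  | atom : ∀ {n k}, L.Rel k → (Fin k → Term L (Fin n)) → Form L n
  | conj : ∀ {n}, Form L n → Form L n → Form L n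
  | disj : ∀ {n}, Form L n → Form L n → Form L n
  | impl : ∀ {n}, Form L n → Form L n → Form L n
  | delta : ∀ {n}, Form L n → Form L n
  | all : ∀ {n}, Form L (n+1) → Form L n
  | ex : ∀ {n}, Form L (n+1) → Form L n

/-- The Gödel truth value of a formula under an interpretation and an
assignment of the free variables. -/
noncomputable def Form.val {L : Lang} {V : Set ℝ} (I : Interp L V) :
    ∀ {n}, Form L n → (Fin n → I.Dom) → ℝ
  | _, .falsum, _ => 0
  | _, .atom R ts, ρ => I.relVal R fun j => Term.eval I ρ (ts j)
  | _, .conj A B, ρ => min (Form.val I A ρ) (Form.val I B ρ)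
  | _, .disj A B, ρ => max (Form.val I A ρ) (Form.val I B ρ)
  | _, .impl A B, ρ => if Form.val I A ρ ≤ Form.val I B ρ then 1 else Form.val I B ρ
  | _, .delta A, ρ => if Form.val I A ρ = 1 then 1 else 0
  | _, .all A, ρ => sInf {v : ℝ | ∃ d : I.Dom, v = Form.val I A (Fin.snoc ρ d)}
  | _, .ex A, ρ => sSup {v : ℝ | ∃ d : I.Dom, v = Form.val I A (Fin.snoc ρ d)}

/-- The value of a sentence. -/
noncomputable def Form.sval {L : Lang} {V : Set ℝ} (I : Interp L V) (A : Form L 0) : ℝ :=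
  Form.val I A Fin.elim0

/-- `A` is valid in `G_V`. -/
def Valid {L : Lang} (V : Set ℝ) (A : Form L 0) : Prop :=
  ∀ I : Interp L V, Form.sval I A = 1

/-- `A` is 1-satisfiable in `G_V`. -/
def OneSat {L : Lang} (V : Set ℝ) (A : Form L 0) : Prop :=
  ∃ I : Interp L V, Form.sval I A = 1

/-- `A` is classically satisfiable: it takes value 1 under a `V`-interpretation
assigning only values in {0,1} to atomic sentences. -/
def ClassSat {L : Lang} (V : Set ℝ) (A : Form L 0) : Prop :=
  ∃ I : Interp L V,
    (∀ {k : ℕ} (R : L.Rel k) (v : Fin k → I.Dom), I.relVal R v = 0 ∨ I.relVal R v = 1) ∧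
    Form.sval I A = 1

/-- ¬A abbreviates A ⊃ ⊥. -/
def Form.not {L : Lang} {n : ℕ} (A : Form L n) : Form L n := Form.impl A Form.falsum

/-- A ↔ B abbreviates (A ⊃ B) ∧ (B ⊃ A). -/
def Form.iff {L : Lang} {n : ℕ} (A B : Form L n) : Form L n :=
  Form.conj (Form.impl A B) (Form.impl B A)

/-- Formulas of the plain language (no Δ). -/
def DeltaFree {L : Lang} : ∀ {n}, Form L n → Prop
  | _, .falsum => True
  | _, .atom _ _ => True
  | _, .conj A B => DeltaFree A ∧ DeltaFree B
  | _, .disj A B => DeltaFree A ∧ DeltaFree B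
  | _, .impl A B => DeltaFree A ∧ DeltaFree B
  | _, .delta _ => False
  | _, .all A => DeltaFree A
  | _, .ex A => DeltaFree A

/-- Quantifier-free formulas. -/
def QuantFree {L : Lang} : ∀ {n}, Form L n → Prop
  | _, .falsum => True
  | _, .atom _ _ => True
  | _, .conj A B => QuantFree A ∧ QuantFree B
  | _, .disj A B => QuantFree A ∧ QuantFree B
  | _, .impl A B => QuantFree A ∧ QuantFree B
  | _, .delta A => QuantFree A
  | _, .all _ => False
  | _, .ex _ => False

/-- Formulas containing no universal quantifier. -/
def AllFree {L : Lang} : ∀ {n}, Form L n → Prop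
  | _, .falsum => True
  | _, .atom _ _ => True
  | _, .conj A B => AllFree A ∧ AllFree B
  | _, .disj A B => AllFree A ∧ AllFree B
  | _, .impl A B => AllFree A ∧ AllFree B
  | _, .delta A => AllFree A
  | _, .all _ => False
  | _, .ex A => AllFree A

/-- Prenex formulas: a block of quantifiers followed by a quantifier-free matrix. -/
inductive IsPrenex {L : Lang} : ∀ {n}, Form L n → Prop
  | qf {n} {A : Form L n} : QuantFree A → IsPrenex A
  | all {n} {A : Form L (n+1)} : IsPrenex A → IsPrenex (Form.all A)
  | ex {n} {A : Form L (n+1)} : IsPrenex A → IsPrenex (Form.ex A)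

/-- Purely existential prenex formulas. -/
inductive ExPrenex {L : Lang} : ∀ {n}, Form L n → Prop
  | qf {n} {A : Form L n} : QuantFree A → ExPrenex A
  | ex {n} {A : Form L (n+1)} : ExPrenex A → ExPrenex (Form.ex A)

/-- The glued interpretation `I_ω`: atoms with value ≤ ω keep their value,
all other atoms get value 1. Same domain and function interpretations. -/
noncomputable def Interp.glue {L : Lang} {V : Set ℝ} (I : Interp L V) (ω : ℝ)
    (h1 : (1:ℝ) ∈ V) : Interp L V where
  Dom := I.Dom
  dom_nonempty := I.dom_nonempty
  funMap := fun {k} f v => I.funMap f v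
  relVal := fun {k} R v => if I.relVal R v ≤ ω then I.relVal R v else 1
  relVal_mem := fun {k} R v => by
    by_cases h : I.relVal R v ≤ ω
    · simpa [h] using I.relVal_mem R v
    · simpa [h] using h1

/-- The Gödel set `V_↑ = {1 - 1/k : k ≥ 1} ∪ {1}`. -/
def Vup : Set ℝ := {x : ℝ | ∃ k : ℕ, 1 ≤ k ∧ x = 1 - 1/(k:ℝ)} ∪ {1}

/-- The `m`-element Gödel set `V_m = {1 - 1/k : 1 ≤ k ≤ m-1} ∪ {1}`. -/
def Vfin (m : ℕ) : Set ℝ :=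
  {x : ℝ | ∃ k : ℕ, 1 ≤ k ∧ k ≤ m - 1 ∧ x = 1 - 1/(k:ℝ)} ∪ {1}

/-- Atomic formula built from a unary predicate. -/
def atom1 {L : Lang} (P : L.Rel 1) {n : ℕ} (t : Term L (Fin n)) : Form L n :=
  Form.atom P fun _ => t

/-- Atomic formula built from a 0-ary predicate (propositional atom). -/
def atom0 {L : Lang} (X : L.Rel 0) {n : ℕ} : Form L n :=
  Form.atom X fun i => i.elim0

def Term.rename {L : Lang} {α β : Type} (f : α → β) : Term L α → Term L β
  | .var i => .var (f i)
  | .func g ts => .func g fun j => Term.rename f (ts j)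

def Form.rename {L : Lang} : ∀ {m n}, (Fin m → Fin n) → Form L m → Form L n
  | _, _, _, .falsum => .falsum
  | _, _, f, .atom R ts => .atom R fun j => (ts j).rename f
  | _, _, f, .conj A B => .conj (A.rename f) (B.rename f)
  | _, _, f, .disj A B => .disj (A.rename f) (B.rename f)
  | _, _, f, .impl A B => .impl (A.rename f) (B.rename f)
  | _, _, f, .delta A => .delta (A.rename f)
  | _, _, f, .all A =>
      .all (A.rename (Fin.lastCases (Fin.last _) fun i => Fin.castSucc (f i)))
  | _, _, f, .ex A =>
      .ex (A.rename (Fin.lastCases (Fin.last _) fun i => Fin.castSucc (f i)))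

/-- Weakening: regard a formula with `n` free variables as one with `n+1`
free variables (not using the new last variable). -/
def Form.lift {L : Lang} {n : ℕ} (A : Form L n) : Form L (n+1) :=
  A.rename Fin.castSucc

def Term.subst {L : Lang} {α β : Type} (σ : α → Term L β) : Term L α → Term L β
  | .var i => σ i
  | .func g ts => .func g fun j => Term.subst σ (ts j)

def Form.subst {L : Lang} : ∀ {m n}, (Fin m → Term L (Fin n)) → Form L m → Form L n
  | _, _, _, .falsum => .falsum
  | _, _, σ, .atom R ts => .atom R fun j => (ts j).subst σ
  | _, _, σ, .conj A B => .conj (A.subst σ) (B.subst σ)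
  | _, _, σ, .disj A B => .disj (A.subst σ) (B.subst σ)
  | _, _, σ, .impl A B => .impl (A.subst σ) (B.subst σ)
  | _, _, σ, .delta A => .delta (A.subst σ)
  | _, _, σ, .all A =>
      .all (A.subst (Fin.lastCases (.var (Fin.last _))
        fun i => (σ i).rename Fin.castSucc))
  | _, _, σ, .ex A =>
      .ex (A.subst (Fin.lastCases (.var (Fin.last _))
        fun i => (σ i).rename Fin.castSucc))

/-- The language `L ∪ {f}` with one new function symbol of arity `a`. -/
def Lang.addFunc (L : Lang) (a : ℕ) : Lang where
  Func := fun k => L.Func k ⊕ PLift (k = a)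
  Rel := L.Rel

/-- The new function symbol of `L.addFunc a`. -/
def newFunc (L : Lang) (a : ℕ) : (L.addFunc a).Func a := Sum.inr ⟨rfl⟩

def Term.emb {L : Lang} {a : ℕ} {α : Type} : Term L α → Term (L.addFunc a) α
  | .var i => .var i
  | .func g ts => .func (Sum.inl g) fun j => Term.emb (ts j)

/-- Embedding of `L`-formulas into the language with the extra function symbol. -/
def Form.emb {L : Lang} {a : ℕ} : ∀ {n}, Form L n → Form (L.addFunc a) n
  | _, .falsum => .falsum
  | _, .atom R ts => .atom R fun j => (ts j).emb
  | _, .conj A B => .conj A.emb B.emb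
  | _, .disj A B => .disj A.emb B.emb
  | _, .impl A B => .impl A.emb B.emb
  | _, .delta A => .delta A.emb
  | _, .all A => .all A.emb
  | _, .ex A => .ex A.emb

/-- Prefix of `n` existential quantifiers (outermost quantifier binds variable 0). -/
def Form.exN {L : Lang} : ∀ n, Form L n → Form L 0
  | 0, A => A
  | n+1, A => Form.exN n (Form.ex A)

/-- Prefix of `n` universal quantifiers (outermost quantifier binds variable 0). -/
def Form.allN {L : Lang} : ∀ n, Form L n → Form L 0
  | 0, A => A
  | n+1, A => Form.allN n (Form.all A)

noncomputable def glueVal (ω x : ℝ) : ℝ := if x ≤ ω then x else 1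

section GlueVal

variable {ω : ℝ}

lemma glueVal_le_one (hω : ω < 1) (x : ℝ) : glueVal ω x ≤ 1 := by
  unfold glueVal
  split_ifs with hx
  exacts [hx.trans hω.le, le_rfl]

lemma glueVal_monotone (hω : ω < 1) : Monotone (glueVal ω) := by
  intro x y hxy
  unfold glueVal
  split_ifs with hx hy hy
  · exact hxy
  · exact hx.trans hω.le
  · exact absurd (hxy.trans hy) hx
  · exact le_rfl

lemma glueVal_imp (hω : ω < 1) (a b : ℝ) :
    glueVal ω (if a ≤ b then 1 else b) =
      if glueVal ω a ≤ glueVal ω b then 1 else glueVal ω b := by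
  by_cases hab : a ≤ b
  · rw [if_pos hab, if_pos (glueVal_monotone hω hab)]
    exact if_neg (not_le.2 hω)
  · simp only [hab, if_false]
    unfold glueVal
    split_ifs <;> linarith

lemma glueVal_ciSup {ι : Type*} [Nonempty ι] (hω : ω < 1) {f : ι → ℝ}
    (hf : BddAbove (Set.range f)) : glueVal ω (⨆ i, f i) = ⨆ i, glueVal ω (f i) := by
  by_cases hsup : ⨆ i, f i ≤ ω
  · have hle : ∀ i, f i ≤ ω := fun i => (le_ciSup hf i).trans hsup
    simp only [glueVal, hsup, hle, if_true]
  · obtain ⟨i, hi⟩ := exists_lt_of_lt_ciSup (not_le.1 hsup)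
    refine (if_neg hsup).trans (le_antisymm ?_ (ciSup_le fun j => glueVal_le_one hω _))
    calc (1 : ℝ) = glueVal ω (f i) := (if_neg (not_le.2 hi)).symm
      _ ≤ ⨆ j, glueVal ω (f j) :=
        le_ciSup ⟨1, Set.forall_mem_range.2 fun j => glueVal_le_one hω _⟩ i

/-- Unlike suprema, infima need the gap above `ω`: a family of values strictly above `ω`
with infimum `ω` would be glued to `1` while its infimum stays `ω`. -/
lemma glueVal_ciInf {ι : Type*} [Nonempty ι] (hω : ω < 1) {ε : ℝ} (hε : 0 < ε)
    {f : ι → ℝ} (hf : BddBelow (Set.range f)) (hgap : ∀ i, f i ∉ Set.Ioo ω (ω + ε)) :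
    glueVal ω (⨅ i, f i) = ⨅ i, glueVal ω (f i) := by
  by_cases hinf : ⨅ i, f i ≤ ω
  · obtain ⟨i₀, hi₀⟩ : ∃ i, f i ≤ ω := by
      by_contra! hall
      have : ω + ε ≤ ⨅ i, f i :=
        le_ciInf fun i => not_lt.1 fun hi => hgap i ⟨hall i, hi⟩
      linarith
    have hbdd : BddBelow (Set.range fun i => glueVal ω (f i)) := by
      obtain ⟨m, hm⟩ := hf
      exact ⟨glueVal ω m,
        Set.forall_mem_range.2 fun i => glueVal_monotone hω (hm ⟨i, rfl⟩)⟩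
    refine (if_pos hinf).trans (le_antisymm (le_ciInf fun i => ?_) (le_ciInf fun i => ?_))
    · unfold glueVal
      split_ifs
      · exact ciInf_le hf i
      · exact hinf.trans hω.le
    · by_cases hi : f i ≤ ω
      · simpa [glueVal, hi] using ciInf_le hbdd i
      · calc ⨅ j, glueVal ω (f j) ≤ glueVal ω (f i₀) := ciInf_le hbdd i₀
          _ = f i₀ := if_pos hi₀
          _ ≤ f i := hi₀.trans (not_le.1 hi).le
  · have hgt : ∀ i, ¬ f i ≤ ω := fun i hi => hinf ((ciInf_le hf i).trans hi)
    simp only [glueVal, hinf, hgt, if_false, ciInf_const]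

end GlueVal

lemma ciInf_mem_of_isClosed {ι : Type*} [Nonempty ι] {V : Set ℝ} (hV : IsClosed V)
    {f : ι → ℝ} (hf : BddBelow (Set.range f)) (hmem : ∀ i, f i ∈ V) : ⨅ i, f i ∈ V :=
  closure_minimal (Set.range_subset_iff.2 hmem) hV (csInf_mem_closure (Set.range_nonempty f) hf)

lemma ciSup_mem_of_isClosed {ι : Type*} [Nonempty ι] {V : Set ℝ} (hV : IsClosed V)
    {f : ι → ℝ} (hf : BddAbove (Set.range f)) (hmem : ∀ i, f i ∈ V) : ⨆ i, f i ∈ V :=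
  closure_minimal (Set.range_subset_iff.2 hmem) hV (csSup_mem_closure (Set.range_nonempty f) hf)

section Val

variable {L : Lang} {V : Set ℝ} (I : Interp L V)

lemma Term.eval_glue (ω : ℝ) (h1 : (1:ℝ) ∈ V) {α : Type} (v : α → I.Dom)
    (t : Term L α) :
    Term.eval (I.glue ω h1) v t = Term.eval I v t := by
  induction t with
  | var i => rfl
  | func f ts ih => exact congrArg (I.funMap f) (funext ih)

lemma Form.val_all {n : ℕ} (A : Form L (n + 1)) (ρ : Fin n → I.Dom) :
    Form.val I (.all A) ρ = ⨅ d, Form.val I A (Fin.snoc ρ d) := by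
  simp only [Form.val, iInf, Set.range, eq_comm]

lemma Form.val_ex {n : ℕ} (A : Form L (n + 1)) (ρ : Fin n → I.Dom) :
    Form.val I (.ex A) ρ = ⨆ d, Form.val I A (Fin.snoc ρ d) := by
  simp only [Form.val, iSup, Set.range, eq_comm]

lemma Form.val_mem (hV : GodelSet V) {n : ℕ} (B : Form L n) (ρ : Fin n → I.Dom) :
    Form.val I B ρ ∈ V := by
  have := I.dom_nonempty
  induction B with
  | falsum => exact hV.2.2.1
  | atom R ts => exact I.relVal_mem R _
  | conj A B ihA ihB =>
    simp only [Form.val]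
    rcases min_choice (Form.val I A ρ) (Form.val I B ρ) with h | h <;> rw [h]
    exacts [ihA ρ, ihB ρ]
  | disj A B ihA ihB =>
    simp only [Form.val]
    rcases max_choice (Form.val I A ρ) (Form.val I B ρ) with h | h <;> rw [h]
    exacts [ihA ρ, ihB ρ]
  | impl A B ihA ihB =>
    simp only [Form.val]
    split_ifs
    exacts [hV.2.2.2, ihB ρ]
  | delta A ih =>
    simp only [Form.val]
    split_ifs
    exacts [hV.2.2.2, hV.2.2.1]
  | all A ih =>
    rw [Form.val_all]
    exact ciInf_mem_of_isClosed hV.1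
      (bddBelow_Icc.mono ((Set.range_subset_iff.2 fun d => ih _).trans hV.2.1)) fun d => ih _
  | ex A ih =>
    rw [Form.val_ex]
    exact ciSup_mem_of_isClosed hV.1
      (bddAbove_Icc.mono ((Set.range_subset_iff.2 fun d => ih _).trans hV.2.1)) fun d => ih _

lemma Form.val_glue (hV : GodelSet V) {ω ε : ℝ} (hω : ω ∈ Set.Ico (0:ℝ) 1) (hε : 0 < ε)
    (hgap : V ∩ Set.Ioo ω (ω + ε) = ∅) {n : ℕ} (B : Form L n) (hB : DeltaFree B)
    (ρ : Fin n → I.Dom) :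
    Form.val (I.glue ω hV.2.2.2) B ρ = glueVal ω (Form.val I B ρ) := by
  have := I.dom_nonempty
  have hrange : ∀ {m} (A : Form L (m + 1)) (ρ : Fin m → I.Dom),
      Set.range (fun d => Form.val I A (Fin.snoc ρ d)) ⊆ Set.Icc 0 1 := fun A ρ =>
    (Set.range_subset_iff.2 fun d => Form.val_mem I hV A _).trans hV.2.1
  induction B with
  | falsum => exact (if_pos hω.1).symm
  | atom R ts =>
    exact congrArg (glueVal ω ∘ I.relVal R) (funext fun j => Term.eval_glue I ω _ ρ (ts j))
  | conj A B ihA ihB =>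
    simp only [Form.val, ihA hB.1, ihB hB.2, (glueVal_monotone hω.2).map_min]
  | disj A B ihA ihB =>
    simp only [Form.val, ihA hB.1, ihB hB.2, (glueVal_monotone hω.2).map_max]
  | impl A B ihA ihB => simp only [Form.val, ihA hB.1, ihB hB.2, glueVal_imp hω.2]
  | delta A => exact hB.elim
  | all A ih =>
    refine (Form.val_all (I.glue ω hV.2.2.2) A ρ).trans ?_
    rw [Form.val_all, glueVal_ciInf hω.2 hε (bddBelow_Icc.mono (hrange A ρ))
      fun d hd => hgap.subset ⟨Form.val_mem I hV A _, hd⟩]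
    exact iInf_congr fun d => ih hB _
  | ex A ih =>
    refine (Form.val_ex (I.glue ω hV.2.2.2) A ρ).trans ?_
    rw [Form.val_ex, glueVal_ciSup hω.2 (bddAbove_Icc.mono (hrange A ρ))]
    exact iSup_congr fun d => ih hB _

end Val

/-- Gluing lemma for all sentences: if `ω ∈ [0,1)` is isolated in
`V` from above (`V ∩ (ω, ω+ε) = ∅` for some `ε > 0`), then for every formula
`B` (with parameters given by an assignment `ρ`), including formulas with
universal quantifiers, `I_ω(B) = I(B)` if `I(B) ≤ ω` and `I_ω(B) = 1`
otherwise. -/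
theorem stmt_2 {L : Lang} {V : Set ℝ} (hV : GodelSet V) (I : Interp L V)
    (ω : ℝ) (hω : ω ∈ Set.Ico (0:ℝ) 1)
    (hiso : ∃ ε > (0:ℝ), V ∩ Set.Ioo ω (ω + ε) = ∅) :
    ∀ {n : ℕ} (B : Form L n), DeltaFree B →
      ∀ ρ : Fin n → I.Dom,
        Form.val (I.glue ω hV.2.2.2) B ρ =
          if Form.val I B ρ ≤ ω then Form.val I B ρ else 1 := by
  obtain ⟨ε, hε, hgap⟩ := hiso
  intro n B hB ρ
  exact Form.val_glue I hV hω hε hgap B hB ρ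

end GodelPaper
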